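/- Let N ≥ 1 and let (D_i, I_i), i = 1,…,N, be independent and identically distributed pairs of {0,1}-valued random variables on a probability space with P(D_1 = 1) > 0. Then E[(Σ_{i=1}^N D_i·I_i)/(Σ_{i=1}^N D_i) | Σ_{i=1}^N D_i > 0] = P(I_1 = 1 | D_1 = 1). -/

import Mathlib

/-!
Write `S = ∑ j, D j`. Whenever `D i ∈ {0, 1}` we have `D i / S = D i * (1 + ∑_{j ≠ i} D j)⁻¹`
(both sides vanish when `D i = 0`), and the second factor is independent of
`(D i, I i)`. Hence `E[D i I i / S] E[D i] = E[D i I i] E[D i / S]` for every `i`. Summing over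
`i`, with identical distribution and `S / S = 1_{S > 0}`, gives
`E[T / S] P(D₀ = 1) = P(D₀ = 1, I₀ = 1) P(S > 0)`; since `T / S` vanishes off `{S > 0}`,
dividing by `P(S > 0)` yields the conditional expectation.
-/

open MeasureTheory ProbabilityTheory Finset

lemma div_sum_eq_mul_inv_one_add_sum_erase {ι : Type*} [Fintype ι] [DecidableEq ι]
    (x : ι → ℝ) {i : ι} (hx : x i = 0 ∨ x i = 1) :
    x i / ∑ j, x j = x i * (1 + ∑ j ∈ univ.erase i, x j)⁻¹ := by
  rcases hx with h | h
  · simp [h]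
  · rw [← add_sum_erase _ _ (mem_univ i), h, div_eq_mul_inv]

section

variable {Ω : Type*} [MeasurableSpace Ω] {μ : Measure Ω}

lemma integral_eq_measureReal_of_eq_zero_or_eq_one {f : Ω → ℝ} (hf : Measurable f)
    (h01 : ∀ ω, f ω = 0 ∨ f ω = 1) : ∫ ω, f ω ∂μ = μ.real {ω | f ω = 1} := by
  rw [← integral_indicator_one (s := {ω | f ω = 1}) (hf (measurableSet_singleton 1))]
  congr with ω
  rcases h01 ω with h | h <;> simp [h]

lemma integral_div_self_of_nonneg {f : Ω → ℝ} (hf : Measurable f) (h0 : ∀ ω, 0 ≤ f ω) :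
    ∫ ω, f ω / f ω ∂μ = μ.real {ω | 0 < f ω} := by
  rw [← integral_indicator_one (measurableSet_lt measurable_const hf)]
  congr with ω
  rcases (h0 ω).lt_or_eq with h | h
  · simp [h, h.ne']
  · simp [← h]

lemma integral_cond_of_forall_notMem_eq_zero {s : Set Ω} {f : Ω → ℝ}
    (hf : ∀ ω ∉ s, f ω = 0) : ∫ ω, f ω ∂μ[|s] = (μ.real s)⁻¹ * ∫ ω, f ω ∂μ := by
  rw [ProbabilityTheory.cond, integral_smul_measure,
    setIntegral_eq_integral_of_forall_compl_eq_zero hf, ENNReal.toReal_inv, smul_eq_mul,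
    measureReal_def]

variable {ι : Type*} [Fintype ι] [DecidableEq ι] {D I : ι → Ω → ℝ}

lemma indepFun_pair_sum_erase (hindep : iIndepFun (fun i ω => (D i ω, I i ω)) μ)
    (hD : ∀ i, Measurable (D i)) (hI : ∀ i, Measurable (I i)) (i : ι) :
    IndepFun (fun ω => (D i ω, I i ω)) (fun ω => ∑ j ∈ univ.erase i, D j ω) μ := by
  have h := hindep.indepFun_finsetSum_of_notMem (fun j => (hD j).prodMk (hI j))
    (notMem_erase i univ)
  have hsum : (fun ω => ∑ j ∈ univ.erase i, D j ω)
      = Prod.fst ∘ ∑ j ∈ univ.erase i, fun ω => (D j ω, I j ω) := by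
    ext ω
    simp [Finset.sum_apply, Prod.fst_sum]
  rw [hsum]
  exact h.symm.comp measurable_id measurable_fst

lemma integral_mul_div_sum_mul_integral (hindep : iIndepFun (fun i ω => (D i ω, I i ω)) μ)
    (hD : ∀ i, Measurable (D i)) (hI : ∀ i, Measurable (I i))
    (hD01 : ∀ i ω, D i ω = 0 ∨ D i ω = 1) (i : ι) :
    (∫ ω, D i ω * I i ω / ∑ j, D j ω ∂μ) * ∫ ω, D i ω ∂μ
      = (∫ ω, D i ω * I i ω ∂μ) * ∫ ω, D i ω / ∑ j, D j ω ∂μ := by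
  set g : Ω → ℝ := fun ω => (1 + ∑ j ∈ univ.erase i, D j ω)⁻¹
  have hdiv (ω : Ω) : D i ω / ∑ j, D j ω = D i ω * g ω :=
    div_sum_eq_mul_inv_one_add_sum_erase (D · ω) (hD01 i ω)
  have hg : IndepFun (fun ω => (D i ω, I i ω)) g μ :=
    (indepFun_pair_sum_erase hindep hD hI i).comp measurable_id
      (measurable_const.add measurable_id).inv
  have hgm : AEStronglyMeasurable g μ :=
    (measurable_const.add (Finset.measurable_sum _ fun j _ => hD j)).inv.aestronglyMeasurable
  have hDI (ω : Ω) : D i ω * I i ω / ∑ j, D j ω = D i ω * I i ω * g ω := by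
    rw [mul_div_right_comm, hdiv, mul_right_comm]
  have hID : ∫ ω, D i ω * I i ω * g ω ∂μ = (∫ ω, D i ω * I i ω ∂μ) * ∫ ω, g ω ∂μ :=
    (hg.comp (measurable_fst.mul measurable_snd) measurable_id).integral_fun_mul_eq_mul_integral
      ((hD i).mul (hI i)).aestronglyMeasurable hgm
  have hD' : ∫ ω, D i ω * g ω ∂μ = (∫ ω, D i ω ∂μ) * ∫ ω, g ω ∂μ :=
    (hg.comp measurable_fst measurable_id).integral_fun_mul_eq_mul_integral
      (hD i).aestronglyMeasurable hgm
  simp_rw [hDI, hdiv, hID, hD']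
  ring

lemma integral_sum_mul_div_sum_mul_integral [IsFiniteMeasure μ]
    (hindep : iIndepFun (fun i ω => (D i ω, I i ω)) μ)
    (hD : ∀ i, Measurable (D i)) (hI : ∀ i, Measurable (I i))
    (hD01 : ∀ i ω, D i ω = 0 ∨ D i ω = 1) (hI01 : ∀ i ω, I i ω = 0 ∨ I i ω = 1)
    (hident : ∀ i j, IdentDistrib (fun ω => (D i ω, I i ω)) (fun ω => (D j ω, I j ω)) μ μ)
    (i₀ : ι) :
    (∫ ω, (∑ i, D i ω * I i ω) / ∑ i, D i ω ∂μ) * ∫ ω, D i₀ ω ∂μ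
      = (∫ ω, D i₀ ω * I i₀ ω ∂μ) * ∫ ω, (∑ i, D i ω) / ∑ i, D i ω ∂μ := by
  have hS : Measurable fun ω => ∑ j, D j ω := Finset.measurable_sum _ fun j _ => hD j
  have hfrac (i : ι) (ω : Ω) : |D i ω / ∑ j, D j ω| ≤ 1 := by
    have hnn (j : ι) : 0 ≤ D j ω := by rcases hD01 j ω with h | h <;> simp [h]
    rw [abs_of_nonneg (div_nonneg (hnn i) (sum_nonneg fun j _ => hnn j))]
    exact div_le_one_of_le₀ (single_le_sum (fun j _ => hnn j) (mem_univ i))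
      (sum_nonneg fun j _ => hnn j)
  have hint_DI (i : ι) : Integrable (fun ω => D i ω * I i ω / ∑ j, D j ω) μ := by
    refine .of_bound (((hD i).mul (hI i)).div hS).aestronglyMeasurable 1
      (ae_of_all _ fun ω => ?_)
    rw [Real.norm_eq_abs, mul_div_right_comm, abs_mul]
    rcases hI01 i ω with h | h <;> simp [h, hfrac i ω]
  have hint_D (i : ι) : Integrable (fun ω => D i ω / ∑ j, D j ω) μ :=
    .of_bound ((hD i).div hS).aestronglyMeasurable 1 (ae_of_all _ fun ω => hfrac i ω)
  simp_rw [sum_div]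
  rw [integral_finsetSum _ fun i _ => hint_DI i, integral_finsetSum _ fun i _ => hint_D i,
    sum_mul, mul_sum]
  refine sum_congr rfl fun i _ => ?_
  have hb : ∫ ω, D i ω ∂μ = ∫ ω, D i₀ ω ∂μ := ((hident i i₀).comp measurable_fst).integral_eq
  have ha : ∫ ω, D i ω * I i ω ∂μ = ∫ ω, D i₀ ω * I i₀ ω ∂μ :=
    ((hident i i₀).comp (measurable_fst.mul measurable_snd)).integral_eq
  rw [← ha, ← hb]
  exact integral_mul_div_sum_mul_integral hindep hD hI hD01 i

end

/-- under i.i.d. joint testing/infectiousness processes between individuals,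
the expected test-positive rate given at least one test equals `P(I₁ = 1 | D₁ = 1)`. -/
theorem stmt1
    {Ω : Type*} [MeasurableSpace Ω] (μ : Measure Ω) [IsProbabilityMeasure μ]
    (N : ℕ) (hN : 0 < N)
    (D I : Fin N → Ω → ℝ)
    (hDmeas : ∀ i, Measurable (D i)) (hImeas : ∀ i, Measurable (I i))
    (hD01 : ∀ i ω, D i ω = 0 ∨ D i ω = 1)
    (hI01 : ∀ i ω, I i ω = 0 ∨ I i ω = 1)
    (hindep : iIndepFun (fun i ω => (D i ω, I i ω)) μ)
    (hident : ∀ i j, IdentDistrib (fun ω => (D i ω, I i ω))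
      (fun ω => (D j ω, I j ω)) μ μ)
    (hD1 : 0 < μ {ω | D ⟨0, hN⟩ ω = 1}) :
    (∫ ω, (∑ i, D i ω * I i ω) / (∑ i, D i ω)
        ∂(μ[|{ω | 0 < ∑ i, D i ω}]))
      = (μ[|{ω | D ⟨0, hN⟩ ω = 1}] {ω | I ⟨0, hN⟩ ω = 1}).toReal := by
  set i₀ : Fin N := ⟨0, hN⟩
  have hD_nonneg (i : Fin N) (ω : Ω) : 0 ≤ D i ω := by rcases hD01 i ω with h | h <;> simp [h]
  have hS_nonneg (ω : Ω) : 0 ≤ ∑ i, D i ω := sum_nonneg fun i _ => hD_nonneg i ω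
  have hDI01 (ω : Ω) : D i₀ ω * I i₀ ω = 0 ∨ D i₀ ω * I i₀ ω = 1 := by
    rcases hD01 i₀ ω with h | h <;> rcases hI01 i₀ ω with h' | h' <;> simp [h, h']
  have hDI_eq_one : {ω | D i₀ ω * I i₀ ω = 1} = {ω | D i₀ ω = 1} ∩ {ω | I i₀ ω = 1} := by
    ext ω
    rcases hD01 i₀ ω with h | h <;> simp [h]
  have hmain := integral_sum_mul_div_sum_mul_integral hindep hDmeas hImeas hD01 hI01 hident i₀
  rw [integral_div_self_of_nonneg (Finset.measurable_sum _ fun i _ => hDmeas i) hS_nonneg,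
    integral_eq_measureReal_of_eq_zero_or_eq_one (hDmeas i₀) (hD01 i₀),
    integral_eq_measureReal_of_eq_zero_or_eq_one (f := fun ω => D i₀ ω * I i₀ ω)
      ((hDmeas i₀).mul (hImeas i₀)) hDI01,
    hDI_eq_one] at hmain
  have hA : 0 < μ.real {ω | D i₀ ω = 1} := ENNReal.toReal_pos hD1.ne' (measure_ne_top _ _)
  have hA_sub_E : {ω | D i₀ ω = 1} ⊆ {ω | 0 < ∑ i, D i ω} := fun ω (hω : D i₀ ω = 1) => by
    have h := single_le_sum (f := (D · ω)) (fun i _ => hD_nonneg i ω) (mem_univ i₀)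
    rw [hω] at h
    exact one_pos.trans_le h
  have hE : 0 < μ.real {ω | 0 < ∑ i, D i ω} := hA.trans_le (measureReal_mono hA_sub_E)
  rw [integral_cond_of_forall_notMem_eq_zero fun ω hω => by
      simp [le_antisymm (not_lt.1 hω) (hS_nonneg ω)],
    cond_apply (s := {ω | D i₀ ω = 1}) (hDmeas i₀ (measurableSet_singleton 1)),
    ENNReal.toReal_mul, ENNReal.toReal_inv, ← measureReal_def, ← measureReal_def]
  field_simp
  linarith
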